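/- arXiv:1808.10768 — 2 statements merged into one kernel-verified Lean document; each statement's English description precedes it below -/
import Mathlib

section
/- For every integer k ≥ 0 one has 0 < G^{(k)}(0) ≤ σᵏ, where G^{(k)}(0) is the kth derivative at 0 of G(z) = ∏_{p ≤ y, p prime} J₀(2i·√(z/p)) and σ = Σ_{p ≤ y, p prime} 1/p. -/
open MeasureTheory Real Complex Filter

/-- The set of primes `p ≤ y`. -/
noncomputable def primesLe (y : ℝ) : Finset ℕ :=
  (Finset.range (⌊y⌋₊ + 1)).filter Nat.Prime

/-- `V_y(t) = ∑_{p ≤ y} sin(t log p)/√p`. -/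
noncomputable def Vy (y t : ℝ) : ℝ :=
  ∑ p ∈ primesLe y, Real.sin (t * Real.log p) / Real.sqrt p

/-- `σ = σ(y) = ∑_{p ≤ y} 1/p`. -/
noncomputable def sigmay (y : ℝ) : ℝ := ∑ p ∈ primesLe y, (1 : ℝ) / p

/-- `J0twoISqrt w = J₀(2i√w) = ∑_{n≥0} wⁿ/(n!)²`, where `J₀` is the Bessel function of
the first kind of order 0. -/
noncomputable def J0twoISqrt (w : ℂ) : ℂ := ∑' n : ℕ, w ^ n / ((n.factorial : ℂ)) ^ 2

/-- `G(z) = ∏_{p ≤ y} J₀(2i√(z/p))`. -/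
noncomputable def Gfun (y : ℝ) (z : ℂ) : ℂ := ∏ p ∈ primesLe y, J0twoISqrt (z / (p : ℂ))

/-!
Each factor is `J₀(2i√(z/p)) = ∑ zⁿ / ((n!)² pⁿ)`, so its `k`-th derivative at `0` is
`p⁻ᵏ / k!`, which lies in `(0, p⁻ᵏ]`. By the Leibniz rule and the binomial theorem, if the
derivatives of `f` and `g` at a point lie in `(0, aᵏ]` and `(0, bᵏ]`, those of `f g` lie in
`(0, (a + b)ᵏ]`; multiplying the factors adds up the `1/p` to `σ`. The intervals are taken in `ℂ`
with `ComplexOrder`, where `0 < w` means that `w` is a positive real, so the derivatives are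
known to be real throughout.
-/

open scoped ContDiff ComplexOrder Nat

section OrderedField

variable {𝕜 : Type*} [NontriviallyNormedField 𝕜] [PartialOrder 𝕜] [IsStrictOrderedRing 𝕜]

theorem iteratedDeriv_mul_mem_Ioc {f g : 𝕜 → 𝕜} {x a b : 𝕜} (hf : ContDiff 𝕜 ∞ f)
    (hg : ContDiff 𝕜 ∞ g) (hfx : ∀ k, iteratedDeriv k f x ∈ Set.Ioc 0 (a ^ k))
    (hgx : ∀ k, iteratedDeriv k g x ∈ Set.Ioc 0 (b ^ k)) (n : ℕ) :
    iteratedDeriv n (fun z => f z * g z) x ∈ Set.Ioc 0 ((a + b) ^ n) := by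
  rw [iteratedDeriv_fun_mul (hf.of_le (by exact_mod_cast le_top)).contDiffAt
    (hg.of_le (by exact_mod_cast le_top)).contDiffAt, add_pow]
  refine ⟨Finset.sum_pos (fun i hi => ?_) Finset.nonempty_range_add_one,
    Finset.sum_le_sum fun i hi => ?_⟩
  all_goals have hchoose : (0 : 𝕜) < n.choose i :=
    Nat.cast_pos.2 (Nat.choose_pos (Nat.lt_succ_iff.mp (Finset.mem_range.mp hi)))
  · exact mul_pos (mul_pos hchoose (hfx i).1) (hgx (n - i)).1
  · rw [mul_assoc, mul_comm (a ^ i * _)]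
    exact mul_le_mul_of_nonneg_left (mul_le_mul (hfx i).2 (hgx (n - i)).2 (hgx (n - i)).1.le
      ((hfx i).1.le.trans (hfx i).2)) hchoose.le

theorem iteratedDeriv_finset_prod_mem_Ioc {ι : Type*} {s : Finset ι} (hs : s.Nonempty)
    {f : ι → 𝕜 → 𝕜} {x : 𝕜} {a : ι → 𝕜} (hf : ∀ i ∈ s, ContDiff 𝕜 ∞ (f i))
    (hfx : ∀ i ∈ s, ∀ k, iteratedDeriv k (f i) x ∈ Set.Ioc 0 (a i ^ k)) (n : ℕ) :
    iteratedDeriv n (fun z => ∏ i ∈ s, f i z) x ∈ Set.Ioc 0 ((∑ i ∈ s, a i) ^ n) := by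
  induction hs using Finset.Nonempty.cons_induction generalizing n with
  | singleton i => simpa using hfx i (Finset.mem_singleton_self i) n
  | cons i s _ _ ih =>
    simp only [Finset.prod_cons, Finset.sum_cons]
    simp only [Finset.forall_mem_cons] at hf hfx
    exact iteratedDeriv_mul_mem_Ioc hf.1 (contDiff_prod hf.2) hfx.1 (fun k => ih hf.2 hfx.2 k) n

end OrderedField

theorem HasFPowerSeriesAt.iteratedDeriv_eq_factorial_mul {𝕜 : Type*} [NontriviallyNormedField 𝕜]
    [CompleteSpace 𝕜] [CharZero 𝕜] {f : 𝕜 → 𝕜} {c : ℕ → 𝕜} {x : 𝕜}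
    (hf : HasFPowerSeriesAt f (FormalMultilinearSeries.ofScalars 𝕜 c) x) (n : ℕ) :
    iteratedDeriv n f x = n ! * c n := by
  have hc := FormalMultilinearSeries.ofScalars_series_injective 𝕜 𝕜
    (hf.eq_formalMultilinearSeries hf.analyticAt.hasFPowerSeriesAt)
  rw [congrFun hc n, mul_div_cancel₀ _ (by exact_mod_cast n.factorial_ne_zero)]

noncomputable def J0Series : FormalMultilinearSeries ℂ ℂ ℂ :=
  FormalMultilinearSeries.ofScalars ℂ fun n => ((n ! : ℂ) ^ 2)⁻¹

theorem J0twoISqrt_eq_sum : J0twoISqrt = J0Series.sum := by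
  ext w
  change _ = FormalMultilinearSeries.ofScalarsSum _ w
  simp only [J0twoISqrt, FormalMultilinearSeries.ofScalars_sum_eq, smul_eq_mul, div_eq_inv_mul]

theorem J0Series_radius : J0Series.radius = ⊤ := by
  refine J0Series.radius_eq_top_of_summable_norm fun r => ?_
  refine (Real.summable_pow_div_factorial r).of_nonneg_of_le (fun n => by positivity) fun n => ?_
  rw [J0Series, FormalMultilinearSeries.ofScalars_norm, norm_inv, norm_pow, Complex.norm_natCast,
    div_eq_inv_mul]
  have h1 : (1 : ℝ) ≤ n ! := by exact_mod_cast n.factorial_pos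
  gcongr
  exact le_self_pow₀ h1 two_ne_zero

theorem hasFPowerSeriesOnBall_J0twoISqrt : HasFPowerSeriesOnBall J0twoISqrt J0Series 0 ⊤ := by
  simpa only [J0twoISqrt_eq_sum, J0Series_radius] using
    J0Series.hasFPowerSeriesOnBall (J0Series_radius ▸ ENNReal.zero_lt_top)

theorem contDiff_J0twoISqrt {n : WithTop ℕ∞} : ContDiff ℂ n J0twoISqrt :=
  AnalyticOnNhd.contDiff fun z _ =>
    hasFPowerSeriesOnBall_J0twoISqrt.analyticOnNhd z (by simp)

theorem iteratedDeriv_J0twoISqrt_zero (n : ℕ) : iteratedDeriv n J0twoISqrt 0 = (n ! : ℂ)⁻¹ := by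
  rw [hasFPowerSeriesOnBall_J0twoISqrt.hasFPowerSeriesAt.iteratedDeriv_eq_factorial_mul]
  have : (n ! : ℂ) ≠ 0 := by exact_mod_cast n.factorial_ne_zero
  field_simp

theorem iteratedDeriv_J0twoISqrt_div_zero (r : ℝ) (n : ℕ) :
    iteratedDeriv n (fun z => J0twoISqrt (z / r)) 0 = ((r⁻¹ ^ n / n ! : ℝ) : ℂ) := by
  simp only [div_eq_inv_mul _ (r : ℂ)]
  rw [iteratedDeriv_comp_const_mul contDiff_J0twoISqrt]
  simp only [mul_zero, iteratedDeriv_J0twoISqrt_zero]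
  push_cast
  ring

theorem iteratedDeriv_J0twoISqrt_div_mem_Ioc {r : ℝ} (hr : 0 < r) (n : ℕ) :
    iteratedDeriv n (fun z => J0twoISqrt (z / r)) 0 ∈ Set.Ioc 0 (((r⁻¹ : ℝ) : ℂ) ^ n) := by
  rw [iteratedDeriv_J0twoISqrt_div_zero, ← Complex.ofReal_pow, Set.mem_Ioc,
    Complex.zero_lt_real, Complex.real_le_real]
  exact ⟨by positivity, div_le_self (by positivity) (by exact_mod_cast n.factorial_pos)⟩

theorem primesLe_nonempty {y : ℝ} (hy : 2 ≤ y) : (primesLe y).Nonempty :=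
  ⟨2, Finset.mem_filter.2 ⟨Finset.mem_range.2 (Nat.lt_succ_of_le (Nat.le_floor hy)), Nat.prime_two⟩⟩

/-- **Lemma 3(c)** (Ivić–Korolev). `0 < G^{(k)}(0) ≤ σᵏ` for every `k ≥ 0`. -/
theorem Gderiv_pos_le :
    ∀ y : ℝ, 2 < y → ∀ k : ℕ,
      0 < (iteratedDeriv k (Gfun y) 0).re ∧
        (iteratedDeriv k (Gfun y) 0).re ≤ (sigmay y) ^ k := by
  intro y hy k
  have hpos : ∀ p ∈ primesLe y, (0 : ℝ) < p := fun p hp =>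
    Nat.cast_pos.2 (Finset.mem_filter.1 hp).2.pos
  have h := iteratedDeriv_finset_prod_mem_Ioc (primesLe_nonempty hy.le)
    (fun p _ => contDiff_J0twoISqrt.comp (contDiff_id.div_const _))
    (fun p hp => iteratedDeriv_J0twoISqrt_div_mem_Ioc (hpos p hp)) k
  simp only [Complex.ofReal_natCast, ← Complex.ofReal_sum, ← one_div, ← Complex.ofReal_pow] at h
  exact ⟨(Complex.pos_iff.1 h.1).1, (Complex.le_def.1 h.2).1⟩
end

section
/- Let Φ_n denote the nth Taylor coefficient at 0 of Φ(z) = ∏_{p ≤ y, p prime} φ(z/p), where φ(z) = e^{−z}·J₀(2i√z). Then for every n ≥ 0 one has |Φ_n| ≤ σⁿ/n!, where σ = Σ_{p ≤ y, p prime} 1/p. -/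
open MeasureTheory Real Complex Filter

/-- `φ(z) = e^{-z} J₀(2i√z)`. -/
noncomputable def phifun (z : ℂ) : ℂ := Complex.exp (-z) * J0twoISqrt z

/-- `Φ(z) = ∏_{p ≤ y} φ(z/p)`. -/
noncomputable def Phifun (y : ℝ) (z : ℂ) : ℂ := ∏ p ∈ primesLe y, phifun (z / (p : ℂ))

/-- The `n`-th Taylor coefficient of `Φ` at `0`. -/
noncomputable def PhiCoef (y : ℝ) (n : ℕ) : ℂ := iteratedDeriv n (Phifun y) 0 / (n.factorial : ℂ)

/-!
Write `φ(z) = ∑ aₙ zⁿ`. Since `J(z) = J₀(2i√z)` solves `z J'' + J' = J`, the product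
`φ = e^{-z} J` solves `z φ'' + (2z + 1) φ' + z φ = 0`, so `bₙ = n! aₙ = (-1)ⁿ Lₙ(1)` (`Lₙ` the
Laguerre polynomial) satisfies `(n+2) b_{n+2} + 2(n+1) b_{n+1} + (n+1) bₙ = 0` with `b₀ = 1`,
`b₁ = 0`. A decreasing energy then gives `|bₙ| ≤ 1`, i.e. `|aₙ| ≤ 1/n!`: `φ(z/p)` is majorised
by `e^{z/p}`, and the product over `p ≤ y` by `e^{σ z}`, whose coefficients are `σⁿ/n!`.
-/

open PowerSeries Finset Nat

theorem abs_le_one_of_recurrence (b : ℕ → ℝ) (h0 : b 0 = 1) (h1 : b 1 = 0)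
    (hrec : ∀ n : ℕ, ((n : ℝ) + 2) * b (n + 2) + 2 * ((n : ℝ) + 1) * b (n + 1)
      + ((n : ℝ) + 1) * b n = 0) (n : ℕ) :
    |b n| ≤ 1 := by
  have energy : ∀ n : ℕ, b (n + 1) ^ 2 + ((n : ℝ) + 1) * (b (n + 1) + b n) ^ 2 ≤ 1 := by
    intro n
    induction n with
    | zero => simp [h0, h1]
    | succ n ih =>
      have hz : b (n + 2) = -((n : ℝ) + 1) * (2 * b (n + 1) + b n) / ((n : ℝ) + 2) := by
        field_simp
        linear_combination hrec n
      have drop : b (n + 2) ^ 2 + ((n : ℝ) + 2) * (b (n + 2) + b (n + 1)) ^ 2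
          = b (n + 1) ^ 2 + ((n : ℝ) + 1) * (b (n + 1) + b n) ^ 2
            - b (n + 2) ^ 2 / ((n : ℝ) + 1) := by
        rw [hz]
        field_simp
        ring
      have : 0 ≤ b (n + 2) ^ 2 / ((n : ℝ) + 1) := by positivity
      push_cast
      linarith
  rcases n with _ | n
  · simp [h0]
  · exact (sq_le_one_iff_abs_le_one _).mp (by nlinarith [energy n, sq_nonneg (b (n + 1) + b n)])

section Series

variable (K : Type*) [Field K] [CharZero K]

noncomputable def expNegSeries : PowerSeries K := mk fun n => (-1) ^ n / n !

noncomputable def besselSeries : PowerSeries K := mk fun n => 1 / (n ! : K) ^ 2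

noncomputable def phiSeries : PowerSeries K := expNegSeries K * besselSeries K

theorem derivative_expNegSeries : d⁄dX K (expNegSeries K) = -expNegSeries K := by
  ext n
  have : (n ! : K) ≠ 0 := mod_cast factorial_ne_zero n
  simp only [coeff_derivative, expNegSeries, coeff_mk, map_neg, factorial_succ]
  push_cast
  field_simp
  ring

theorem besselSeries_ode :
    X * d⁄dX K (d⁄dX K (besselSeries K)) + d⁄dX K (besselSeries K) = besselSeries K := by
  ext (_ | n)
  · rw [map_add, coeff_zero_X_mul, coeff_derivative]
    simp [besselSeries]
  · rw [map_add, coeff_succ_X_mul, coeff_derivative, coeff_derivative]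
    simp only [besselSeries, coeff_mk, factorial_succ]
    have : (n ! : K) ≠ 0 := mod_cast factorial_ne_zero n
    have : (n : K) + 1 + 1 ≠ 0 := mod_cast succ_ne_zero (n + 1)
    push_cast
    field_simp

theorem phiSeries_ode :
    X * (d⁄dX K (d⁄dX K (phiSeries K)) + 2 • d⁄dX K (phiSeries K) + phiSeries K)
      + d⁄dX K (phiSeries K) = 0 := by
  have leibniz_expNeg (F : PowerSeries K) :
      d⁄dX K (expNegSeries K * F) = -(expNegSeries K * F) + expNegSeries K * d⁄dX K F := by
    rw [Derivation.leibniz, derivative_expNegSeries, smul_eq_mul, smul_eq_mul]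
    ring
  have h1 := leibniz_expNeg (besselSeries K)
  have h2 := leibniz_expNeg (d⁄dX K (besselSeries K))
  rw [phiSeries, h1, map_add, map_neg, h1, h2]
  linear_combination expNegSeries K * besselSeries_ode K

theorem coeff_phiSeries_recurrence (n : ℕ) :
    ((n : K) + 2) ^ 2 * coeff (n + 2) (phiSeries K)
      + 2 * ((n : K) + 1) * coeff (n + 1) (phiSeries K) + coeff n (phiSeries K) = 0 := by
  have h := congrArg (coeff (n + 1)) (phiSeries_ode K)
  simp only [map_add, map_nsmul, coeff_succ_X_mul, coeff_derivative, map_zero] at h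
  push_cast at h
  linear_combination h

theorem coeff_zero_phiSeries : coeff 0 (phiSeries K) = 1 := by
  simp [phiSeries, expNegSeries, besselSeries]

theorem coeff_one_phiSeries : coeff 1 (phiSeries K) = 0 := by
  have h := congrArg (coeff 0) (phiSeries_ode K)
  rwa [map_add, coeff_zero_X_mul, coeff_derivative, zero_add, map_zero, zero_add, cast_zero,
    zero_add, mul_one] at h

theorem map_phiSeries {L : Type*} [Field L] [CharZero L] (f : K →+* L) :
    map f (phiSeries K) = phiSeries L := by
  ext n
  simp [phiSeries, expNegSeries, besselSeries, coeff_mul]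

end Series

theorem abs_coeff_phiSeries_le (n : ℕ) : |coeff n (phiSeries ℝ)| ≤ 1 / n ! := by
  have h := abs_le_one_of_recurrence (fun n => n ! * coeff n (phiSeries ℝ))
    (by simp [coeff_zero_phiSeries]) (by simp [coeff_one_phiSeries]) (fun n => by
      simp only [factorial_succ]
      push_cast
      linear_combination ((n : ℝ) + 1) * n ! * coeff_phiSeries_recurrence ℝ n) n
  rw [abs_mul, Nat.abs_cast] at h
  rw [le_div_iff₀ (by positivity)]
  linarith

theorem norm_coeff_phiSeries_le (n : ℕ) : ‖coeff n (phiSeries ℂ)‖ ≤ 1 / n ! := by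
  rw [← map_phiSeries ℝ (algebraMap ℝ ℂ), coeff_map, Complex.coe_algebraMap, Complex.norm_real,
    Real.norm_eq_abs]
  exact abs_coeff_phiSeries_le n

/-- `f z = ∑ aₙ zⁿ` on all of `ℂ`, with the coefficients of `A` majorised by those of `e^{cz}`. -/
structure HasExpBoundedSeries (f : ℂ → ℂ) (c : ℝ) (A : PowerSeries ℂ) : Prop where
  norm_coeff_le : ∀ n, ‖coeff n A‖ ≤ c ^ n / (n ! : ℝ)
  hasSum : ∀ z, HasSum (fun n => coeff n A * z ^ n) (f z)

theorem sum_antidiagonal_pow_div_factorial (c d : ℝ) (n : ℕ) :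
    ∑ kl ∈ antidiagonal n, c ^ kl.1 / kl.1 ! * (d ^ kl.2 / kl.2 !) = (c + d) ^ n / n ! := by
  simpa [coeff_mul, div_eq_mul_inv, mul_comm, mul_left_comm, mul_assoc] using
    congrArg (coeff n) (exp_mul_exp_eq_exp_add c d)

theorem summable_norm_coeff_mul_pow {c : ℝ} {A : PowerSeries ℂ}
    (hA : ∀ n, ‖coeff n A‖ ≤ c ^ n / (n ! : ℝ)) (z : ℂ) :
    Summable fun n => ‖coeff n A * z ^ n‖ := by
  refine .of_nonneg_of_le (fun n => norm_nonneg _) (fun n => ?_)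
    (Real.summable_pow_div_factorial (c * ‖z‖))
  rw [norm_mul, norm_pow, mul_pow, mul_div_right_comm]
  gcongr
  exact hA n

namespace HasExpBoundedSeries

variable {f g : ℂ → ℂ} {c d : ℝ} {A B : PowerSeries ℂ}

theorem summable_norm (h : HasExpBoundedSeries f c A) (z : ℂ) :
    Summable fun n => ‖coeff n A * z ^ n‖ :=
  summable_norm_coeff_mul_pow h.norm_coeff_le z

theorem mul (hf : HasExpBoundedSeries f c A) (hg : HasExpBoundedSeries g d B) :
    HasExpBoundedSeries (f * g) (c + d) (A * B) where
  norm_coeff_le n := by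
    rw [coeff_mul, ← sum_antidiagonal_pow_div_factorial]
    refine (norm_sum_le _ _).trans (sum_le_sum fun kl _ => ?_)
    rw [norm_mul]
    exact mul_le_mul (hf.norm_coeff_le _) (hg.norm_coeff_le _) (norm_nonneg _)
      ((norm_nonneg _).trans (hf.norm_coeff_le _))
  hasSum z := by
    have hA := hf.summable_norm z
    have hB := hg.summable_norm z
    have cauchy : ∀ n, ∑ kl ∈ antidiagonal n, coeff kl.1 A * z ^ kl.1 * (coeff kl.2 B * z ^ kl.2)
        = coeff n (A * B) * z ^ n := by
      intro n
      rw [coeff_mul, sum_mul]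
      refine sum_congr rfl fun kl hkl => ?_
      rw [← mem_antidiagonal.mp hkl, pow_add]
      ring
    have := (summable_sum_mul_antidiagonal_of_summable_norm' hA hA.of_norm hB hB.of_norm).hasSum
    rwa [← tsum_mul_tsum_eq_tsum_sum_antidiagonal_of_summable_norm hA hB, (hf.hasSum z).tsum_eq,
      (hg.hasSum z).tsum_eq, funext cauchy] at this

theorem comp_const_mul (h : HasExpBoundedSeries f c A) (t : ℂ) :
    HasExpBoundedSeries (fun z => f (t * z)) (‖t‖ * c) (rescale t A) where
  norm_coeff_le n := by
    rw [coeff_rescale, norm_mul, norm_pow, mul_pow, mul_div_assoc]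
    gcongr
    exact h.norm_coeff_le n
  hasSum z := by
    simpa [coeff_rescale, mul_pow, mul_assoc, mul_left_comm] using h.hasSum (t * z)

theorem one : HasExpBoundedSeries 1 0 1 where
  norm_coeff_le n := by cases n <;> simp [coeff_one]
  hasSum z := by
    rw [Pi.one_apply]
    convert hasSum_ite_eq 0 (1 : ℂ) using 1
    ext (_ | n) <;> simp [coeff_one]

theorem prod {ι : Type*} (s : Finset ι) {f : ι → ℂ → ℂ} {c : ι → ℝ} {A : ι → PowerSeries ℂ}
    (h : ∀ i ∈ s, HasExpBoundedSeries (f i) (c i) (A i)) :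
    HasExpBoundedSeries (∏ i ∈ s, f i) (∑ i ∈ s, c i) (∏ i ∈ s, A i) := by
  classical
  induction s using Finset.induction_on with
  | empty => simpa using one
  | insert i s hi ih =>
    rw [prod_insert hi, sum_insert hi, prod_insert hi]
    exact (h i (mem_insert_self i s)).mul (ih fun j hj => h j (mem_insert_of_mem hj))

theorem hasFPowerSeriesOnBall (h : HasExpBoundedSeries f c A) :
    HasFPowerSeriesOnBall f (FormalMultilinearSeries.ofScalars ℂ fun n => coeff n A) 0 ⊤ where
  r_le := by
    refine (FormalMultilinearSeries.radius_eq_top_of_summable_norm _ fun r => ?_).ge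
    simpa [FormalMultilinearSeries.ofScalars_norm] using h.summable_norm r
  r_pos := ENNReal.zero_lt_top
  hasSum {z} _ := by
    simpa [FormalMultilinearSeries.ofScalars_apply_eq, mul_comm] using h.hasSum z

theorem iteratedDeriv_div_factorial (h : HasExpBoundedSeries f c A) (n : ℕ) :
    iteratedDeriv n f 0 / n ! = coeff n A := by
  have hA := h.hasFPowerSeriesOnBall.hasFPowerSeriesAt
  have := hA.analyticAt.hasFPowerSeriesAt.eq_formalMultilinearSeries hA
  exact congrFun (FormalMultilinearSeries.ofScalars_series_injective ℂ ℂ this) n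

theorem of_norm_coeff_le (hA : ∀ n, ‖coeff n A‖ ≤ c ^ n / (n ! : ℝ)) :
    HasExpBoundedSeries (fun z => ∑' n, coeff n A * z ^ n) c A :=
  ⟨hA, fun z => (summable_norm_coeff_mul_pow hA z).of_norm.hasSum⟩

end HasExpBoundedSeries

theorem hasExpBoundedSeries_expNeg :
    HasExpBoundedSeries (fun z => Complex.exp (-z)) 1 (expNegSeries ℂ) where
  norm_coeff_le n := by simp [expNegSeries]
  hasSum z := by
    rw [Complex.exp_eq_exp_ℂ]
    simpa [expNegSeries, neg_pow z, mul_div_assoc, mul_comm] using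
      NormedSpace.expSeries_div_hasSum_exp (-z)

theorem hasExpBoundedSeries_J0twoISqrt : HasExpBoundedSeries J0twoISqrt 1 (besselSeries ℂ) := by
  have bound (n : ℕ) : ‖coeff n (besselSeries ℂ)‖ ≤ 1 ^ n / (n ! : ℝ) := by
    have : (1 : ℝ) ≤ n ! := mod_cast one_le_iff_ne_zero.mpr (factorial_ne_zero n)
    simp only [besselSeries, coeff_mk, norm_div, norm_one, norm_pow, Complex.norm_natCast, one_pow]
    gcongr
    nlinarith
  convert HasExpBoundedSeries.of_norm_coeff_le bound using 1
  ext z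
  simp [J0twoISqrt, besselSeries, div_eq_mul_inv, mul_comm]

theorem hasExpBoundedSeries_phifun : HasExpBoundedSeries phifun 1 (phiSeries ℂ) where
  norm_coeff_le n := by simpa using norm_coeff_phiSeries_le n
  hasSum := (hasExpBoundedSeries_expNeg.mul hasExpBoundedSeries_J0twoISqrt).hasSum

/-- **Lemma 4(a)** (Ivić–Korolev). `|Φ_n| ≤ σⁿ/n!` for every `n ≥ 0`. -/
theorem PhiCoef_le_sigma_pow :
    ∀ y : ℝ, 2 < y → ∀ n : ℕ,
      ‖PhiCoef y n‖ ≤ (sigmay y) ^ n / (n.factorial : ℝ) := by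
  intro y _ n
  have factor (p : ℕ) : HasExpBoundedSeries (fun z => phifun ((p : ℂ)⁻¹ * z)) (1 / p)
      (rescale (p : ℂ)⁻¹ (phiSeries ℂ)) := by
    simpa using hasExpBoundedSeries_phifun.comp_const_mul (p : ℂ)⁻¹
  have hΦ := HasExpBoundedSeries.prod (primesLe y) fun p _ => factor p
  have hprod : (∏ p ∈ primesLe y, fun z => phifun ((p : ℂ)⁻¹ * z)) = Phifun y := by
    ext z
    simp [Phifun, div_eq_inv_mul]
  rw [hprod] at hΦ
  rw [PhiCoef, hΦ.iteratedDeriv_div_factorial]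
  exact hΦ.norm_coeff_le n
end
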